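/- arXiv:1704.03189 — 6 statements merged into one kernel-verified Lean document; each statement's English description precedes it below -/
import Mathlib

section
/- For any permutation σ of {1,...,n}, the Kendall distance D(σ) = |{(i,j) : i < j and σ(i) > σ(j)}| and Spearman's footrule F(σ) = Σ_{i=1}^n |i - σ(i)| satisfy D(σ) ≤ F(σ) ≤ 2 D(σ). -/
/-!
Let `b i = #{j > i | σ j < σ i}` and `a i = #{j < i | σ i < σ j}`; both sum to the number `D` of
inversions. Counting the `j` with `σ j < σ i` according to whether `j < i` or not gives the balance
`σ i + a i = i + b i`, hence `|i - σ i| ≤ a i + b i`, and summing gives `F ≤ 2 D`.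

For `D ≤ F`, send an inversion `(i, j)` to the point `σ j ∈ [i, σ i)` if `i ≤ σ j`, and to the
point `i ∈ [σ j, j)` otherwise. Over a fixed `i` (resp. `j`) these points are distinct, and the
intervals `[i, σ i)`, `[σ i, i)` have total length `|i - σ i|`.
-/

open Finset

section Fiberwise

variable {α β : Type*} [Fintype α] [Fintype β] (p : α × β → Prop) [DecidablePred p]

theorem Finset.card_filter_univ_prod_eq_sum_fst : #{x | p x} = ∑ a, #{b | p (a, b)} := by
  simp only [card_filter, Fintype.sum_prod_type]

theorem Finset.card_filter_univ_prod_eq_sum_snd : #{x | p x} = ∑ b, #{a | p (a, b)} := by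
  simp only [card_filter, Fintype.sum_prod_type_right]

end Fiberwise

theorem Int.natCast_sub_add_natCast_sub_eq_abs (a b : ℕ) :
    ((a - b : ℕ) : ℤ) + ((b - a : ℕ) : ℤ) = |(a : ℤ) - b| := by
  rcases le_total a b with h | h <;> simp [h, abs_of_nonpos, abs_of_nonneg, Nat.cast_sub]

namespace Equiv.Perm

variable {n : ℕ} (σ : Perm (Fin n))

def inversions : Finset (Fin n × Fin n) := {p | p.1 < p.2 ∧ σ p.2 < σ p.1}

theorem card_inversions_eq_sum_fst : #σ.inversions = ∑ i, #{j | i < j ∧ σ j < σ i} :=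
  card_filter_univ_prod_eq_sum_fst _

theorem card_inversions_eq_sum_snd : #σ.inversions = ∑ j, #{i | i < j ∧ σ j < σ i} :=
  card_filter_univ_prod_eq_sum_snd _

theorem card_filter_apply_lt (i : Fin n) : #{j | σ j < σ i} = σ i := by
  rw [← Fin.card_Iio (σ i)]
  exact card_equiv σ (by simp)

theorem val_apply_add_card_eq (i : Fin n) :
    (σ i : ℕ) + #{j | j < i ∧ σ i < σ j} = i + #{j | i < j ∧ σ j < σ i} := by
  have below : #{j | j < i ∧ σ j < σ i} + #{j | j < i ∧ σ i < σ j} = i := by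
    rw [← Fin.card_Iio i, ← card_filter_add_card_filter_not (s := Iio i) (fun j => σ j < σ i)]
    congr 2 <;> ext j
    · simp
    · simp only [mem_filter, mem_univ, mem_Iio, true_and, not_lt]
      grind [σ.injective.eq_iff]
  have smaller : #{j | j < i ∧ σ j < σ i} + #{j | i < j ∧ σ j < σ i} = σ i := by
    rw [← card_filter_apply_lt σ i,
      ← card_filter_add_card_filter_not (s := {j | σ j < σ i}) (fun j => j < i)]
    congr 2 <;> ext j
    · simp [and_comm]
    · simp only [mem_filter, mem_univ, true_and, not_lt]
      grind [σ.injective.eq_iff]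
  omega

theorem abs_sub_le_card_add_card (i : Fin n) :
    |(i : ℤ) - σ i| ≤ #{j | j < i ∧ σ i < σ j} + #{j | i < j ∧ σ j < σ i} := by
  have := σ.val_apply_add_card_eq i
  rw [abs_le]
  omega

theorem sum_abs_sub_le_two_mul_card_inversions :
    ∑ i : Fin n, |(i : ℤ) - σ i| ≤ 2 * #σ.inversions :=
  calc ∑ i : Fin n, |(i : ℤ) - σ i|
      ≤ ∑ i : Fin n, ((#{j | j < i ∧ σ i < σ j} : ℤ) + #{j | i < j ∧ σ j < σ i}) :=
        sum_le_sum fun i _ => σ.abs_sub_le_card_add_card i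
    _ = 2 * #σ.inversions := by
        rw [sum_add_distrib, two_mul]
        nth_rw 1 [card_inversions_eq_sum_snd, card_inversions_eq_sum_fst]
        push_cast
        rfl

theorem card_inversions_le_sum_abs_sub : (#σ.inversions : ℤ) ≤ ∑ i : Fin n, |(i : ℤ) - σ i| := by
  have rightward : #{p ∈ σ.inversions | p.1 ≤ σ p.2} ≤ ∑ i, (σ i - i : ℕ) := by
    rw [inversions, filter_filter, card_filter_univ_prod_eq_sum_fst]
    gcongr with i
    rw [← Fin.card_Ico]
    refine card_le_card_of_injOn σ (fun j hj => ?_) σ.injective.injOn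
    simp only [coe_filter, mem_univ, true_and, Set.mem_ofPred_eq] at hj
    simp only [coe_Ico, Set.mem_Ico]
    exact ⟨hj.2, hj.1.2⟩
  have leftward : #{p ∈ σ.inversions | ¬p.1 ≤ σ p.2} ≤ ∑ j, (j - σ j : ℕ) := by
    rw [inversions, filter_filter, card_filter_univ_prod_eq_sum_snd]
    gcongr with j
    rw [← Fin.card_Ico]
    refine card_le_card fun i hi => ?_
    simp only [mem_filter, mem_univ, true_and, not_le] at hi
    simp only [mem_Ico]
    exact ⟨hi.2.le, hi.1.1⟩
  calc (#σ.inversions : ℤ)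
      = #{p ∈ σ.inversions | p.1 ≤ σ p.2} + #{p ∈ σ.inversions | ¬p.1 ≤ σ p.2} := by
        exact_mod_cast (card_filter_add_card_filter_not _).symm
    _ ≤ ∑ i, ((σ i - i : ℕ) : ℤ) + ∑ i, ((i - σ i : ℕ) : ℤ) := by
        exact_mod_cast add_le_add rightward leftward
    _ = ∑ i : Fin n, |(i : ℤ) - σ i| := by
        rw [← sum_add_distrib]
        simp only [Int.natCast_sub_add_natCast_sub_eq_abs, abs_sub_comm]

end Equiv.Perm

/-- Diaconis–Graham: Kendall distance `D(σ)` and Spearman's footrule `F(σ)`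
satisfy `D(σ) ≤ F(σ) ≤ 2·D(σ)`. -/
theorem kendall_le_footrule_le_two_kendall (n : ℕ) (σ : Equiv.Perm (Fin n)) :
    ((Finset.univ.filter (fun p : Fin n × Fin n => p.1 < p.2 ∧ σ p.2 < σ p.1)).card : ℤ)
        ≤ ∑ i : Fin n, |(i : ℤ) - (σ i : ℤ)| ∧
    (∑ i : Fin n, |(i : ℤ) - (σ i : ℤ)|)
        ≤ 2 * ((Finset.univ.filter
            (fun p : Fin n × Fin n => p.1 < p.2 ∧ σ p.2 < σ p.1)).card : ℤ) :=
  ⟨Equiv.Perm.card_inversions_le_sum_abs_sub σ,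
    Equiv.Perm.sum_abs_sub_le_two_mul_card_inversions σ⟩
end

section
/- The determinant of the s×s matrix M(λ) with M_{11} = 5 - λ, M_{ii} = 2 - λ for 2 ≤ i ≤ s, M_{i,i+1} = M_{i+1,i} = -1, M_{1s} = M_{s1} = -2, and zeros elsewhere, equals (5-λ)·U_{s-1}((2-λ)/2) - 5·U_{s-2}((2-λ)/2) - 4, where U_n denotes the Chebyshev polynomial of the second kind. -/
/-!
Expanding `det M` along its first row and then its first column gives the bordering formula
`det M = M₀₀ · det B - u ⬝ᵥ (adj B *ᵥ v)`, where `B` is `M` with first row and column removed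
and `u`, `v` are the rest of that row and column. Here `B` is the tridiagonal matrix with `2x`,
`x = (2 - λ)/2`, on the diagonal and `-1` beside it, whose determinant is `U_{s-1}(x)` by the
three-term recurrence, and `u = v = -e₀ - 2 e_last`. So only the four corner entries of `adj B`
matter: the diagonal ones are `det` of a smaller tridiagonal matrix, `U_{s-2}(x)`, and the
off-diagonal ones are `±` triangular minors with `-1` on the diagonal, which come out to `1`.
-/

open Matrix Polynomial

namespace Matrix

variable {R : Type*} [CommRing R]

theorem det_succ_row_col_zero {n : ℕ} (A : Matrix (Fin (n + 2)) (Fin (n + 2)) R) :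
    A.det = A 0 0 * (A.submatrix Fin.succ Fin.succ).det -
      (fun j => A 0 j.succ) ⬝ᵥ (adjugate (A.submatrix Fin.succ Fin.succ) *ᵥ fun i => A i.succ 0) := by
  rw [det_succ_row_zero, Fin.sum_univ_succ]
  simp only [Fin.val_zero, pow_zero, one_mul, Fin.succAbove_zero, sub_eq_add_neg, dotProduct,
    mulVec, ← Finset.sum_neg_distrib, Finset.mul_sum]
  congr 1
  refine Finset.sum_congr rfl fun j _ => ?_
  rw [det_succ_column_zero, Finset.mul_sum]
  refine Finset.sum_congr rfl fun i _ => ?_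
  rw [adjugate_fin_succ_eq_det_submatrix]
  simp only [submatrix_apply, Fin.succ_succAbove_zero, submatrix_submatrix, Function.comp_def,
    Fin.succ_succAbove_succ, Fin.val_succ, pow_succ, pow_add]
  ring

theorem adjugate_zero_zero {n : ℕ} (A : Matrix (Fin (n + 1)) (Fin (n + 1)) R) :
    adjugate A 0 0 = (A.submatrix Fin.succ Fin.succ).det := by
  simp [adjugate_fin_succ_eq_det_submatrix]

def chebyshevTridiag (x : R) (n : ℕ) : Matrix (Fin n) (Fin n) R :=
  of fun i j => if i = j then 2 * x else if (i : ℕ) + 1 = j ∨ (j : ℕ) + 1 = i then -1 else 0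

section chebyshevTridiag

variable (x : R)

theorem chebyshevTridiag_submatrix_succ_succ (n : ℕ) :
    (chebyshevTridiag x (n + 1)).submatrix Fin.succ Fin.succ = chebyshevTridiag x n := by
  ext i j
  simp [chebyshevTridiag]

theorem chebyshevTridiag_submatrix_castSucc_castSucc (n : ℕ) :
    (chebyshevTridiag x (n + 1)).submatrix Fin.castSucc Fin.castSucc = chebyshevTridiag x n := by
  ext i j
  simp [chebyshevTridiag]

theorem det_chebyshevTridiag_submatrix_succ_castSucc (n : ℕ) :
    ((chebyshevTridiag x (n + 1)).submatrix Fin.succ Fin.castSucc).det = (-1) ^ n := by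
  rw [det_of_isUpperTriangular]
  · simp [chebyshevTridiag, Fin.ext_iff]
  · intro i j hji
    simp [chebyshevTridiag, Fin.ext_iff, ← Fin.val_fin_lt] at hji ⊢
    rw [if_neg (by omega), if_neg (by omega)]

theorem det_chebyshevTridiag_submatrix_castSucc_succ (n : ℕ) :
    ((chebyshevTridiag x (n + 1)).submatrix Fin.castSucc Fin.succ).det = (-1) ^ n := by
  rw [det_of_isLowerTriangular]
  · simp [chebyshevTridiag, Fin.ext_iff]
  · intro i j hji
    simp [chebyshevTridiag, Fin.ext_iff, ← Fin.val_fin_lt] at hji ⊢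
    rw [if_neg (by omega), if_neg (by omega)]

theorem det_chebyshevTridiag : ∀ n : ℕ, (chebyshevTridiag x n).det = (Chebyshev.U R n).eval x
  | 0 => by simp
  | 1 => by simp [chebyshevTridiag]
  | n + 2 => by
    have hborder : (fun j : Fin (n + 1) => chebyshevTridiag x (n + 2) 0 j.succ) = Pi.single 0 (-1) ∧
        (fun i : Fin (n + 1) => chebyshevTridiag x (n + 2) i.succ 0) = Pi.single 0 (-1) := by
      constructor <;> ext i <;> rcases Fin.eq_zero_or_eq_succ i with rfl | ⟨i, rfl⟩ <;>
        simp [chebyshevTridiag, Fin.ext_iff]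
    have hcorner : chebyshevTridiag x (n + 2) 0 0 = 2 * x := by simp [chebyshevTridiag]
    rw [det_succ_row_col_zero, hborder.1, hborder.2, chebyshevTridiag_submatrix_succ_succ, hcorner]
    simp [adjugate_zero_zero, chebyshevTridiag_submatrix_succ_succ, det_chebyshevTridiag n,
      det_chebyshevTridiag (n + 1), Chebyshev.U_add_two]

theorem corners_dotProduct_adjugate_chebyshevTridiag_mulVec (n : ℕ) (a b : R) :
    (Pi.single 0 a + Pi.single (Fin.last (n + 1)) b) ⬝ᵥ
        (adjugate (chebyshevTridiag x (n + 2)) *ᵥ (Pi.single 0 a + Pi.single (Fin.last (n + 1)) b)) =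
      (a ^ 2 + b ^ 2) * (Chebyshev.U R (n + 1)).eval x + 2 * a * b := by
  have hsign : ((-1 : R) ^ (n + 1)) ^ 2 = 1 := by rw [← pow_mul, pow_mul', neg_one_sq, one_pow]
  simp [mulVec_add, dotProduct_add, add_dotProduct, adjugate_fin_succ_eq_det_submatrix,
    Fin.succAbove_last, chebyshevTridiag_submatrix_succ_succ,
    chebyshevTridiag_submatrix_castSucc_castSucc, det_chebyshevTridiag_submatrix_succ_castSucc,
    det_chebyshevTridiag_submatrix_castSucc_succ, det_chebyshevTridiag]
  linear_combination (2 * a * b) * hsign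

end chebyshevTridiag

end Matrix

/-- The determinant of the matrix `M(λ)` equals
`(5-λ)·U_{s-1}((2-λ)/2) - 5·U_{s-2}((2-λ)/2) - 4`, where `U_n` is the Chebyshev
polynomial of the second kind. -/
theorem det_M_chebyshev (s : ℕ) (hs : 3 ≤ s) (lam : ℝ)
    (M : Matrix (Fin s) (Fin s) ℝ)
    (hM : ∀ i j, M i j =
      if (i : ℕ) = 0 ∧ (j : ℕ) = 0 then 5 - lam
      else if i = j then 2 - lam
      else if (i : ℕ) + 1 = (j : ℕ) ∨ (j : ℕ) + 1 = (i : ℕ) then -1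
      else if ((i : ℕ) = 0 ∧ (j : ℕ) + 1 = s) ∨ ((i : ℕ) + 1 = s ∧ (j : ℕ) = 0) then -2
      else 0) :
    M.det = (5 - lam) * (Polynomial.Chebyshev.U ℝ (s - 1 : ℤ)).eval ((2 - lam) / 2)
      - 5 * (Polynomial.Chebyshev.U ℝ (s - 2 : ℤ)).eval ((2 - lam) / 2) - 4 := by
  obtain ⟨n, rfl⟩ : ∃ n, s = n + 3 := ⟨s - 3, by omega⟩
  have hcorner : M 0 0 = 5 - lam := by simp [hM]
  have hsub : M.submatrix Fin.succ Fin.succ = chebyshevTridiag ((2 - lam) / 2) (n + 2) := by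
    ext i j
    rw [submatrix_apply, hM]
    simp [chebyshevTridiag, mul_div_cancel₀]
  have hborder :
      (fun j : Fin (n + 2) => M 0 j.succ) = Pi.single 0 (-1) + Pi.single (Fin.last _) (-2) ∧
      (fun i : Fin (n + 2) => M i.succ 0) = Pi.single 0 (-1) + Pi.single (Fin.last _) (-2) := by
    constructor <;> ext i <;> rw [hM] <;>
      simp only [Pi.add_apply, Pi.single_apply, Fin.ext_iff, Fin.val_zero, Fin.val_last,
        Fin.val_succ, Nat.add_one_ne_zero, and_false, false_and, and_true, true_and, false_or,
        or_false, ↓reduceIte] <;>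
      split_ifs <;> first | contradiction | omega | norm_num
  rw [det_succ_row_col_zero, hcorner, hsub, hborder.1, hborder.2,
    corners_dotProduct_adjugate_chebyshevTridiag_mulVec, det_chebyshevTridiag]
  have hcast₁ : ((n + 3 : ℕ) : ℤ) - 1 = ((n + 2 : ℕ) : ℤ) := by omega
  have hcast₂ : ((n + 3 : ℕ) : ℤ) - 2 = (n : ℤ) + 1 := by omega
  rw [hcast₁, hcast₂]
  ring
end

section
/- For θ with sin θ ≠ 0 and s ≥ 3, the characteristic determinant det(D^{-2} - (2 - 2cos θ)I) equals (sin((s+1)θ) + 3sin(sθ) - 4sin((s-1)θ) - 4sin θ)/sin θ, where D^{-2} is the s×s symmetric matrix with (D^{-2})_{11} = 5, other diagonal entries 2, off-diagonal entries (D^{-2})_{i,i+1} = -1, corner entries (D^{-2})_{1s} = (D^{-2})_{s1} = -2, and zeros elsewhere. -/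
/-!
Subtracting `(2 - 2 cos θ) I` from `D⁻²` leaves the tridiagonal matrix `Tₛ` with diagonal
`2 cos θ` and off-diagonals `-1`, perturbed by `3` in the top-left entry and by `-2` in the two
corners. Expanding along the first row, `det Tₖ` satisfies the Chebyshev recurrence, so
`det Tₖ = Uₖ(cos θ) = sin((k + 1) θ) / sin θ`. All perturbations sit in the first and last
rows, so multilinearity in these two rows splits the determinant into six terms: `det Tₛ`,
`3 det Tₛ₋₁`, one term per corner whose minor is triangular with determinant `±1` (giving `-2`
each), the vanishing term with both rows multiples of `e₁`, and the term with both corners,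
which reduces to `-4 det Tₛ₋₂`.
-/

open Matrix Real

namespace Matrix

variable {R : Type*} [CommRing R]

theorem det_eq_of_row_eq_single {n : ℕ} (A : Matrix (Fin (n + 1)) (Fin (n + 1)) R)
    {i j : Fin (n + 1)} {c : R} (h : A i = Pi.single j c) :
    A.det = (-1) ^ (i + j : ℕ) * c * (A.submatrix i.succAbove j.succAbove).det := by
  have hc : Pi.single j c = c • Pi.single j (1 : R) := by
    rw [← Pi.single_smul, smul_eq_mul, mul_one]
  rw [← updateRow_eq_self A i, h, hc, det_updateRow_smul, ← adjugate_apply,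
    adjugate_fin_succ_eq_det_submatrix, submatrix_updateRow_succAbove]
  ring

theorem det_eq_of_col_eq_single {n : ℕ} (A : Matrix (Fin (n + 1)) (Fin (n + 1)) R)
    {i j : Fin (n + 1)} {c : R} (h : ∀ k, A k j = (Pi.single i c : Fin (n + 1) → R) k) :
    A.det = (-1) ^ (i + j : ℕ) * c * (A.submatrix i.succAbove j.succAbove).det := by
  rw [← det_transpose, det_eq_of_row_eq_single Aᵀ (funext h), ← transpose_submatrix,
    det_transpose, add_comm]

theorem det_updateRow_single {n : ℕ} (A : Matrix (Fin (n + 1)) (Fin (n + 1)) R)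
    (i j : Fin (n + 1)) (c : R) :
    (A.updateRow i (Pi.single j c)).det =
      (-1) ^ (i + j : ℕ) * c * (A.submatrix i.succAbove j.succAbove).det := by
  rw [det_eq_of_row_eq_single _ updateRow_self, submatrix_updateRow_succAbove]

theorem add_single_eq_updateRow {m n α : Type*} [DecidableEq m] [DecidableEq n] [AddZeroClass α]
    (A : Matrix m n α) (i : m) (j : n) (c : α) :
    A + single i j c = A.updateRow i (A i + Pi.single j c) := by
  ext k l
  by_cases hk : k = i
  · subst hk
    simp [single_apply, Pi.single_apply, eq_comm]
  · simp [updateRow_apply, hk, Ne.symm hk]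

section Multilinear

variable {ι : Type*} [Fintype ι] [DecidableEq ι]

theorem det_updateRow_add_of_eq (A : Matrix ι ι R) {i : ι} {w : ι → R} (h : A i = w)
    (u : ι → R) : (A.updateRow i (w + u)).det = A.det + (A.updateRow i u).det := by
  rw [det_updateRow_add, ← h, updateRow_eq_self]

theorem det_updateRow_add_updateRow_add (A : Matrix ι ι R) {i j : ι} (hij : i ≠ j)
    (u v : ι → R) :
    ((A.updateRow i (A i + u)).updateRow j (A j + v)).det =
      A.det + (A.updateRow i u).det + (A.updateRow j v).det
        + ((A.updateRow i u).updateRow j v).det := by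
  rw [det_updateRow_add_of_eq _ (updateRow_ne hij.symm), det_updateRow_add_of_eq _ rfl,
    updateRow_comm _ hij, det_updateRow_add_of_eq _ (updateRow_ne hij),
    updateRow_comm _ hij.symm]
  ring

end Multilinear

def tridiag (a : R) (n : ℕ) : Matrix (Fin n) (Fin n) R :=
  of fun i j =>
    if (i : ℕ) = j then a else if (i : ℕ) + 1 = j ∨ (j : ℕ) + 1 = i then -1 else 0

variable (a : R) (n : ℕ)

theorem tridiag_transpose : (tridiag a n)ᵀ = tridiag a n := by
  ext i j
  simp only [tridiag, transpose_apply, of_apply, eq_comm (a := (i : ℕ)), or_comm]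

theorem tridiag_submatrix_succ :
    (tridiag a (n + 1)).submatrix Fin.succ Fin.succ = tridiag a n := by
  ext i j
  simp [tridiag]

theorem det_tridiag_submatrix_succ_castSucc :
    ((tridiag a (n + 1)).submatrix Fin.succ Fin.castSucc).det = (-1) ^ n := by
  have hupper : ((tridiag a (n + 1)).submatrix Fin.succ Fin.castSucc).IsUpperTriangular := by
    intro i j (hji : j < i)
    rw [Fin.lt_def] at hji
    simp only [submatrix_apply, tridiag, of_apply, Fin.val_succ, Fin.val_castSucc]
    split_ifs <;> first | rfl | omega
  rw [det_of_isUpperTriangular hupper]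
  simp [tridiag]

theorem det_tridiag_submatrix_castSucc_succ :
    ((tridiag a (n + 1)).submatrix Fin.castSucc Fin.succ).det = (-1) ^ n := by
  rw [← det_transpose, transpose_submatrix, tridiag_transpose,
    det_tridiag_submatrix_succ_castSucc]

theorem det_tridiag_add_two :
    (tridiag a (n + 2)).det = a * (tridiag a (n + 1)).det - (tridiag a n).det := by
  set T := tridiag a (n + 2)
  have hrow : T 0 = Pi.single 0 a + Pi.single 1 (-1) := by
    ext j
    rcases Fin.eq_zero_or_eq_succ j with rfl | ⟨j, rfl⟩
    · simp [T, tridiag]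
    · rcases Fin.eq_zero_or_eq_succ j with rfl | ⟨j, rfl⟩ <;>
        simp [T, tridiag, Fin.succ_succ_ne_one]
  have hminor : (T.submatrix Fin.succ (Fin.succAbove 1)).det = -(tridiag a n).det := by
    have hcol (k : Fin (n + 1)) :
        T.submatrix Fin.succ (Fin.succAbove 1) k 0 = (Pi.single 0 (-1) : Fin (n + 1) → R) k := by
      rcases Fin.eq_zero_or_eq_succ k with rfl | ⟨k, rfl⟩ <;> simp [T, tridiag]
    have hsub :
        (T.submatrix Fin.succ (Fin.succAbove 1)).submatrix Fin.succ Fin.succ = tridiag a n := by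
      ext i j
      simp [T, tridiag]
    rw [det_eq_of_col_eq_single _ hcol, Fin.succAbove_zero, hsub]
    simp
  rw [← updateRow_eq_self T 0, hrow, det_updateRow_add, det_updateRow_single,
    det_updateRow_single, Fin.succAbove_zero, hminor]
  simp only [T, tridiag_submatrix_succ, Fin.val_zero, Fin.val_one]
  ring

theorem det_tridiag_two_mul_eq_eval_U (x : R) :
    (tridiag (2 * x) n).det = (Polynomial.Chebyshev.U R n).eval x := by
  induction n using Nat.twoStepInduction with
  | zero => simp
  | one => simp [tridiag]
  | more n ih₀ ih₁ =>
    rw [det_tridiag_add_two, ih₀, ih₁]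
    push_cast
    simp [Polynomial.Chebyshev.U_add_two]

theorem det_tridiag_add_corners (b c : R) :
    (tridiag a (n + 2) + single 0 0 b + single 0 (Fin.last (n + 1)) c
        + single (Fin.last (n + 1)) 0 c).det =
      (tridiag a (n + 2)).det + b * (tridiag a (n + 1)).det + 2 * c
        - c ^ 2 * (tridiag a n).det := by
  set T := tridiag a (n + 2)
  have hL : (0 : Fin (n + 2)) ≠ Fin.last (n + 1) := Fin.last_pos.ne
  rw [add_single_eq_updateRow, add_single_eq_updateRow, add_single_eq_updateRow, updateRow_self,
    updateRow_idem, updateRow_ne hL.symm, add_assoc (T 0), det_updateRow_add_updateRow_add T hL,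
    det_updateRow_add, updateRow_comm _ hL, det_updateRow_add, det_updateRow_single,
    det_updateRow_single, det_updateRow_single, det_updateRow_single, det_updateRow_single]
  simp only [Fin.succAbove_zero, Fin.succAbove_last, Fin.val_zero, Fin.val_last, zero_add,
    add_zero, pow_zero, one_mul]
  set S := T.updateRow (Fin.last (n + 1)) (Pi.single 0 c)
  have hzero : (S.submatrix Fin.succ Fin.succ).det = 0 :=
    det_eq_zero_of_row_eq_zero (Fin.last n) fun j => by simp [S]
  have hcorner : (S.submatrix Fin.succ Fin.castSucc).det = (-1) ^ n * c * (tridiag a n).det := by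
    have hrow : S.submatrix Fin.succ Fin.castSucc (Fin.last n) = Pi.single 0 c := by
      ext j
      simp [S, Pi.single_apply]
    have hsub : (S.submatrix Fin.succ Fin.castSucc).submatrix Fin.castSucc Fin.succ =
        tridiag a n := by
      ext i j
      simp [S, T, tridiag, updateRow_apply]
    rw [det_eq_of_row_eq_single _ hrow, Fin.succAbove_last, Fin.succAbove_zero, hsub]
    simp
  rw [hzero, hcorner, tridiag_submatrix_succ, det_tridiag_submatrix_succ_castSucc,
    det_tridiag_submatrix_castSucc_succ]
  have hsq (k : ℕ) : (-1 : R) ^ k * (-1) ^ k = 1 := by rw [← mul_pow]; simp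
  have hsign : (-1 : R) ^ (n + 1) * (-1) ^ n = -1 := by
    rw [pow_succ, mul_right_comm, hsq]
    simp
  linear_combination (2 * c) * hsq (n + 1) + c ^ 2 * (tridiag a n).det * hsign

end Matrix

/-- The characteristic determinant `det(D⁻² - (2 - 2cos θ)·I)` equals
`(sin((s+1)θ) + 3sin(sθ) - 4sin((s-1)θ) - 4sin θ)/sin θ`. -/
theorem det_Dinvsq_sub_explicit (s : ℕ) (hs : 3 ≤ s) (θ : ℝ) (hθ : Real.sin θ ≠ 0)
    (Dinvsq : Matrix (Fin s) (Fin s) ℝ)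
    (hDinvsq : ∀ i j, Dinvsq i j =
      if (i : ℕ) = 0 ∧ (j : ℕ) = 0 then 5
      else if i = j then 2
      else if (i : ℕ) + 1 = (j : ℕ) ∨ (j : ℕ) + 1 = (i : ℕ) then -1
      else if ((i : ℕ) = 0 ∧ (j : ℕ) + 1 = s) ∨ ((i : ℕ) + 1 = s ∧ (j : ℕ) = 0) then -2
      else 0) :
    (Dinvsq - (2 - 2 * Real.cos θ) • (1 : Matrix (Fin s) (Fin s) ℝ)).det
      = (Real.sin ((s + 1) * θ) + 3 * Real.sin (s * θ)
          - 4 * Real.sin ((s - 1) * θ) - 4 * Real.sin θ) / Real.sin θ := by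
  obtain ⟨n, rfl⟩ : ∃ n, s = n + 2 := ⟨s - 2, by omega⟩
  have hM : Dinvsq - (2 - 2 * cos θ) • 1 =
      tridiag (2 * cos θ) (n + 2) + single 0 0 3 + single 0 (Fin.last (n + 1)) (-2)
        + single (Fin.last (n + 1)) 0 (-2) := by
    ext i j
    simp only [Matrix.sub_apply, Matrix.add_apply, Matrix.smul_apply, one_apply, hDinvsq,
      tridiag, of_apply, single_apply, Fin.ext_iff, Fin.val_zero, Fin.val_last, smul_eq_mul]
    split_ifs <;> first | omega | ring1
  have hU (k : ℕ) : (Polynomial.Chebyshev.U ℝ k).eval (cos θ) = sin ((k + 1) * θ) / sin θ :=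
    eq_div_of_mul_eq hθ (by exact_mod_cast Polynomial.Chebyshev.U_real_cos θ k)
  rw [hM, det_tridiag_add_corners, det_tridiag_two_mul_eq_eval_U, det_tridiag_two_mul_eq_eval_U,
    det_tridiag_two_mul_eq_eval_U, hU, hU, hU]
  field_simp
  push_cast
  ring_nf
end

section
/- For every integer s ≥ 2 and every x ∈ [1/4, 1), the function p(θ) = sin((s+1)θ) + 3sin(sθ) - 4sin((s-1)θ) - 4sin(θ) satisfies p(xπ/s) < 0. -/
/-!
Write `A = xπ ∈ [π/4, π)` and `θ = A/s ∈ (0, A/2]`. Expanding `sin (A ± θ)` gives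
`p θ = 3 sin A (1 - cos θ) - sin θ (4 - 5 cos A)`, and after dividing by `2 sin (θ/2) > 0` the
claim becomes `3 sin A tan (θ/2) < 4 - 5 cos A`. As `tan (θ/2) ≤ tan (A/4)`, it suffices to treat
`θ = A/2`, where with `c = cos (A/2)` the inequality reads `6 c (1 - c) < 9 - 10 c²`, i.e.
`4c² + 6c < 9`; this holds because `c ≤ cos (π/8) ≈ 0.924` while the positive root is `≈ 0.927`.
-/

open Real

lemma four_mul_cos_sq_add_six_mul_cos_lt_nine {t : ℝ} (h₁ : π / 8 ≤ t) (h₂ : t ≤ π) :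
    4 * cos t ^ 2 + 6 * cos t < 9 := by
  set k := cos (π / 8)
  have hk_pos : 0 < k := cos_pos_of_mem_Ioo ⟨by linarith [pi_pos], by linarith [pi_pos]⟩
  have hk_sq : k ^ 2 = 1 / 2 + √2 / 4 := by
    rw [cos_sq, show 2 * (π / 8) = π / 4 by ring, cos_pi_div_four]; ring
  have hsqrt2 : √2 < 1.42 := by nlinarith [sq_sqrt (show (0 : ℝ) ≤ 2 by norm_num), sqrt_nonneg 2]
  have hk_lt : k < 0.9247 := by nlinarith
  have hle : cos t ≤ k := cos_le_cos_of_nonneg_of_le_pi (by positivity) h₂ h₁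
  have hfactor : 0 ≤ 4 * cos t + 4 * k + 6 := by linarith [neg_one_le_cos t]
  nlinarith [mul_nonneg (sub_nonneg.2 hle) hfactor]

lemma three_mul_sin_mul_sin_div_four_lt {A : ℝ} (h₁ : π / 4 ≤ A) (h₂ : A < π) :
    3 * sin A * sin (A / 4) < cos (A / 4) * (4 - 5 * cos A) := by
  set c := cos (A / 2)
  have hc4_pos : 0 < cos (A / 4) := cos_pos_of_mem_Ioo ⟨by linarith [pi_pos], by linarith⟩
  have hsin : sin A = 2 * (2 * sin (A / 4) * cos (A / 4)) * c := by
    rw [← sin_two_mul, show 2 * (A / 4) = A / 2 by ring, ← sin_two_mul]; ring_nf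
  have hcos : cos A = 2 * c ^ 2 - 1 := by rw [← cos_two_mul]; ring_nf
  have hsin_sq : 2 * sin (A / 4) ^ 2 = 1 - c := by
    rw [sin_sq, cos_sq, show 2 * (A / 4) = A / 2 by ring]; ring
  have hbound := four_mul_cos_sq_add_six_mul_cos_lt_nine (t := A / 2) (by linarith) (by linarith)
  calc 3 * sin A * sin (A / 4) = 6 * (1 - c) * c * cos (A / 4) := by
        rw [hsin, ← hsin_sq]; ring
    _ < (9 - 10 * c ^ 2) * cos (A / 4) := by gcongr; linarith
    _ = cos (A / 4) * (4 - 5 * cos A) := by rw [hcos]; ring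

lemma three_mul_sin_mul_sin_lt_of_le_div_four {A φ : ℝ} (h₁ : π / 4 ≤ A) (h₂ : A < π)
    (hφ₀ : 0 ≤ φ) (hφA : φ ≤ A / 4) :
    3 * sin A * sin φ < cos φ * (4 - 5 * cos A) := by
  have hcore := three_mul_sin_mul_sin_div_four_lt h₁ h₂
  have hsinA : 0 ≤ sin A := sin_nonneg_of_nonneg_of_le_pi (by linarith [pi_pos]) h₂.le
  have hc4_pos : 0 < cos (A / 4) := cos_pos_of_mem_Ioo ⟨by linarith [pi_pos], by linarith⟩
  have hfactor_pos : 0 < 4 - 5 * cos A := by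
    refine pos_of_mul_pos_right (hcore.trans_le' ?_) hc4_pos.le
    exact mul_nonneg (by positivity) (sin_nonneg_of_nonneg_of_le_pi (by linarith) (by linarith))
  calc 3 * sin A * sin φ ≤ 3 * sin A * sin (A / 4) := by
        gcongr; exact sin_le_sin_of_le_of_le_pi_div_two (by linarith) (by linarith) hφA
    _ < cos (A / 4) * (4 - 5 * cos A) := hcore
    _ ≤ cos φ * (4 - 5 * cos A) := by
        gcongr; exact cos_le_cos_of_nonneg_of_le_pi hφ₀ (by linarith) hφA

lemma three_mul_sin_mul_one_sub_cos_lt {A θ : ℝ} (h₁ : π / 4 ≤ A) (h₂ : A < π)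
    (hθ : 0 < θ) (hθA : θ ≤ A / 2) :
    3 * sin A * (1 - cos θ) < sin θ * (4 - 5 * cos A) := by
  have hhalf := three_mul_sin_mul_sin_lt_of_le_div_four h₁ h₂ (by linarith : 0 ≤ θ / 2)
    (by linarith)
  have hsin_pos : 0 < sin (θ / 2) := sin_pos_of_pos_of_lt_pi (by linarith) (by linarith)
  have hsin : sin θ = 2 * sin (θ / 2) * cos (θ / 2) := by rw [← sin_two_mul]; ring_nf
  have hcos : 1 - cos θ = 2 * sin (θ / 2) ^ 2 := by rw [sin_sq, cos_sq]; ring_nf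
  calc 3 * sin A * (1 - cos θ) = 3 * sin A * sin (θ / 2) * (2 * sin (θ / 2)) := by
        rw [hcos]; ring
    _ < cos (θ / 2) * (4 - 5 * cos A) * (2 * sin (θ / 2)) := by gcongr
    _ = sin θ * (4 - 5 * cos A) := by rw [hsin]; ring

lemma sin_add_add_three_mul_sin_sub_eq (A θ : ℝ) :
    sin (A + θ) + 3 * sin A - 4 * sin (A - θ) - 4 * sin θ
      = 3 * sin A * (1 - cos θ) - sin θ * (4 - 5 * cos A) := by
  rw [sin_add, sin_sub]; ring

/-- For every integer `s ≥ 2` and `x ∈ [1/4, 1)`,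
`p(xπ/s) < 0` where `p(θ) = sin((s+1)θ) + 3sin(sθ) - 4sin((s-1)θ) - 4sin θ`. -/
theorem p_neg_on_interval (s : ℕ) (hs : 2 ≤ s) (x : ℝ) (hx : x ∈ Set.Ico (1/4 : ℝ) 1) :
    Real.sin (((s : ℝ) + 1) * (x * π / s)) + 3 * Real.sin ((s : ℝ) * (x * π / s))
      - 4 * Real.sin (((s : ℝ) - 1) * (x * π / s)) - 4 * Real.sin (x * π / s) < 0 := by
  obtain ⟨hx₁, hx₂⟩ := hx
  have hs₂ : (2 : ℝ) ≤ s := by exact_mod_cast hs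
  have hsθ : (s : ℝ) * (x * π / s) = x * π := by field_simp
  have hA₁ : π / 4 ≤ x * π := by nlinarith [pi_pos]
  have hA₂ : x * π < π := by nlinarith [pi_pos]
  have hθ : 0 < x * π / s := by have := pi_pos; positivity
  have hθA : x * π / s ≤ x * π / 2 := div_le_div_of_nonneg_left (by linarith) two_pos hs₂
  rw [add_mul, sub_mul, hsθ, one_mul, sin_add_add_three_mul_sin_sub_eq]
  linarith [three_mul_sin_mul_one_sub_cos_lt hA₁ hA₂ hθ hθA]
end

section
/- For every even integer s ≥ 5, the function p(θ) = sin((s+1)θ) + 3sin(sθ) - 4sin((s-1)θ) - 4sin(θ) has a root in the open interval (π/s², π/(4s)). -/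
/-!
Writing `sin((s ± 1)θ)` by the addition formulas gives
`p(θ) = 3 sin(sθ)(1 - cos θ) + sin θ (5 cos(sθ) - 4)`.
At `θ = π/s²` we have `sθ = π/s ≤ π/5`, so `cos(sθ) > 4/5` and both terms are nonnegative, the
second one positive. At `θ = π/(4s)` we have `sθ = π/4`, and since `5/√2 < 4` the second term is
of order `-θ` while the first is `O(θ²)`, so `p(θ) < 0`. The intermediate value theorem gives a
root in between.
-/

open Real

namespace PHasRoot

noncomputable def p (s θ : ℝ) : ℝ :=
  sin ((s + 1) * θ) + 3 * sin (s * θ) - 4 * sin ((s - 1) * θ) - 4 * sin θ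

theorem p_eq (s θ : ℝ) :
    p s θ = 3 * sin (s * θ) * (1 - cos θ) + sin θ * (5 * cos (s * θ) - 4) := by
  rw [p, add_mul, sub_mul, one_mul, sin_add, sin_sub]
  ring

theorem continuous_p (s : ℝ) : Continuous (p s) := by
  unfold p
  fun_prop

theorem four_fifths_lt_cos {x : ℝ} (hx₀ : 0 ≤ x) (hx : x ≤ π / 5) : 4 / 5 < cos x := by
  have hx' : x < 0.63 := by linarith [pi_lt_d2]
  nlinarith [one_sub_sq_div_two_le_cos (x := x)]

theorem p_pos {s θ : ℝ} (hθ₀ : 0 < θ) (hθ : θ < π) (hsθ₀ : 0 ≤ s * θ) (hsθ : s * θ ≤ π / 5) :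
    0 < p s θ := by
  have hsin : 0 ≤ sin (s * θ) := sin_nonneg_of_nonneg_of_le_pi hsθ₀ (by linarith [pi_pos])
  have hcos : 4 / 5 < cos (s * θ) := four_fifths_lt_cos hsθ₀ hsθ
  rw [p_eq]
  have := mul_nonneg (mul_nonneg zero_le_three hsin) (sub_nonneg.2 (cos_le_one θ))
  have := mul_pos (sin_pos_of_pos_of_lt_pi hθ₀ hθ) (by linarith : 0 < 5 * cos (s * θ) - 4)
  linarith

theorem p_neg {s θ : ℝ} (hθ₀ : 0 < θ) (hθ : θ ≤ 1 / 4) (hsθ : s * θ = π / 4) : p s θ < 0 := by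
  have hsqrt : (1.41 : ℝ) < √2 := by
    rw [lt_sqrt (by norm_num)]
    norm_num
  have hcos := one_sub_sq_div_two_le_cos (x := θ)
  have hsin := sin_ge_sub_cube hθ₀.le
  -- multiplied by `√2`, the claim reads `3 (1 - cos θ) < (4√2 - 5) sin θ`
  suffices 3 * (1 - cos θ) < (4 * √2 - 5) * sin θ by
    rw [p_eq, hsθ, sin_pi_div_four, cos_pi_div_four]
    nlinarith [sq_sqrt (zero_le_two : (0 : ℝ) ≤ 2), mul_pos (sqrt_pos.2 two_pos) (sub_pos.2 this)]
  nlinarith [sin_pos_of_pos_of_lt_pi hθ₀ (by linarith [pi_gt_three])]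

end PHasRoot

open PHasRoot in
theorem p_has_root_general (s : ℕ) (hs : 5 ≤ s) :
    ∃ θ ∈ Set.Ioo (π / (s : ℝ) ^ 2) (π / (4 * s)),
      Real.sin (((s : ℝ) + 1) * θ) + 3 * Real.sin ((s : ℝ) * θ)
        - 4 * Real.sin (((s : ℝ) - 1) * θ) - 4 * Real.sin θ = 0 := by
  have hs5 : (5 : ℝ) ≤ s := by exact_mod_cast hs
  have hs₀ : (0 : ℝ) < s := by linarith
  have hlt : π / (s : ℝ) ^ 2 < π / (4 * s) :=
    div_lt_div_of_pos_left pi_pos (by positivity) (by nlinarith)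
  have hleft : 0 < p s (π / (s : ℝ) ^ 2) := by
    refine p_pos (by positivity) (div_lt_self pi_pos (by nlinarith)) (by positivity) ?_
    rw [show (s : ℝ) * (π / s ^ 2) = π / s by field_simp]
    exact div_le_div_of_nonneg_left pi_pos.le (by norm_num) hs5
  have hright : p s (π / (4 * s)) < 0 := by
    apply p_neg (by positivity) ?_ (by field_simp)
    rw [div_le_iff₀ (by positivity)]
    nlinarith [pi_lt_d2]
  exact intermediate_value_Ioo' hlt.le (continuous_p s).continuousOn ⟨hright, hleft⟩

/-- For every even integer `s ≥ 5`, the function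
`p(θ) = sin((s+1)θ) + 3sin(sθ) - 4sin((s-1)θ) - 4sin θ` has a root in `(π/s², π/(4s))`. -/
theorem p_has_root (s : ℕ) (hs : 5 ≤ s) (hse : Even s) :
    ∃ θ ∈ Set.Ioo (π / (s : ℝ) ^ 2) (π / (4 * s)),
      Real.sin (((s : ℝ) + 1) * θ) + 3 * Real.sin ((s : ℝ) * θ)
        - 4 * Real.sin (((s : ℝ) - 1) * θ) - 4 * Real.sin θ = 0 :=
  p_has_root_general s hs
end

section
/- Let x, y ∈ ℝⁿ and let R be a set of pairs (i,j) with i < j such that for each (i,j) ∈ R we have x_i > x_j but y_i ≤ y_j. Then 2n‖x - y‖² ≥ Σ_{(i,j)∈R} (x_i - x_j)²/2. -/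
open Finset

/-- If `R` consists of pairs `(i,j)` with `i < j`, `x_i > x_j` and `y_i ≤ y_j`, then
`2n‖x - y‖² ≥ Σ_{(i,j)∈R} (x_i - x_j)²/2`. -/
theorem inversion_lower_bound (n : ℕ) (x y : Fin n → ℝ)
    (R : Finset (Fin n × Fin n))
    (hR : ∀ p ∈ R, p.1 < p.2 ∧ x p.2 < x p.1 ∧ y p.1 ≤ y p.2) :
    ∑ p ∈ R, (x p.1 - x p.2) ^ 2 / 2
      ≤ 2 * n * ∑ i : Fin n, (x i - y i) ^ 2 := by
  have hkey : ∀ p ∈ R, (x p.1 - x p.2) ^ 2 / 2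
      ≤ (x p.1 - y p.1) ^ 2 + (x p.2 - y p.2) ^ 2 := by
    intro p hp
    obtain ⟨-, hx, hy⟩ := hR p hp
    nlinarith [sq_nonneg (x p.1 - y p.1 + (x p.2 - y p.2)), sq_nonneg (y p.2 - y p.1),
      mul_nonneg (sub_nonneg.2 hy) (sub_pos.2 hx).le]
  have step1 : ∑ p ∈ R, (x p.1 - x p.2) ^ 2 / 2
      ≤ ∑ p ∈ R, ((x p.1 - y p.1) ^ 2 + (x p.2 - y p.2) ^ 2) :=
    Finset.sum_le_sum hkey
  have h1 : ∑ p ∈ R, (x p.1 - y p.1) ^ 2 ≤ n * ∑ i : Fin n, (x i - y i) ^ 2 := by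
    calc ∑ p ∈ R, (x p.1 - y p.1) ^ 2
        ≤ ∑ p : Fin n × Fin n, (x p.1 - y p.1) ^ 2 :=
          Finset.sum_le_sum_of_subset_of_nonneg (Finset.subset_univ R)
            (fun p _ _ => sq_nonneg _)
      _ = n * ∑ i : Fin n, (x i - y i) ^ 2 := by
          rw [Fintype.sum_prod_type]
          simp [Finset.sum_const, nsmul_eq_mul, Finset.mul_sum, mul_comm]
  have h2 : ∑ p ∈ R, (x p.2 - y p.2) ^ 2 ≤ n * ∑ i : Fin n, (x i - y i) ^ 2 := by
    calc ∑ p ∈ R, (x p.2 - y p.2) ^ 2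
        ≤ ∑ p : Fin n × Fin n, (x p.2 - y p.2) ^ 2 :=
          Finset.sum_le_sum_of_subset_of_nonneg (Finset.subset_univ R)
            (fun p _ _ => sq_nonneg _)
      _ = n * ∑ i : Fin n, (x i - y i) ^ 2 := by
          rw [Fintype.sum_prod_type_right]
          simp [Finset.sum_const, nsmul_eq_mul, Finset.mul_sum, mul_comm]
  rw [Finset.sum_add_distrib] at step1
  linarith
end
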